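/- The no-conflicting-data-channels invariant (for each pair of distinct devices i ≠ j, at least one of the D2H data channel of device i and the H2D data channel of device j is empty) is preserved by any rule that appends a message to device i's D2H data channel only under the guard that device j's H2D data channel is empty and does not add to any H2D data channel. -/
import Mathlib


variable {Data : Type*}

structure SysState (Data : Type*) where
  d2hData : Bool → List Data
  h2dData : Bool → List Data

def inv (σ : SysState Data) : Prop :=
  ∀ i j : Bool, i ≠ j → (σ.d2hData i = [] ∨ σ.h2dData j = [])

/-- A rule is data-disciplined if H2D data channels only shrink, and D2H data
channels are unchanged, shrink, or gain one message only under the guard that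
the other device's H2D data channel is empty (before and after). -/
def DataDisciplined (r : SysState Data → SysState Data → Prop) : Prop :=
  ∀ σ σ', r σ σ' →
    (∀ i : Bool, σ'.h2dData i = σ.h2dData i ∨ σ'.h2dData i = (σ.h2dData i).tail) ∧
    (∀ i : Bool,
      σ'.d2hData i = σ.d2hData i ∨ σ'.d2hData i = (σ.d2hData i).tail ∨
      (∃ m, σ'.d2hData i = σ.d2hData i ++ [m] ∧
        σ.h2dData (!i) = [] ∧ σ'.h2dData (!i) = []))

theorem data_disciplined_preserves_inv
    (r : SysState Data → SysState Data → Prop) (hr : DataDisciplined r)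
    (σ σ' : SysState Data) (hstep : r σ σ')
    (hlen : ∀ i : Bool, (σ.d2hData i).length ≤ 1 ∧ (σ.h2dData i).length ≤ 1)
    (hlen' : ∀ i : Bool, (σ'.d2hData i).length ≤ 1 ∧ (σ'.h2dData i).length ≤ 1)
    (hinv : inv σ) : inv σ' := by
  intro i j hij
  obtain ⟨hH, hD⟩ := hr σ σ' hstep
  have hj : j = !i := by cases i <;> cases j <;> simp_all
  subst hj
  rcases hD i with h | h | ⟨m, hm, hg, hg'⟩
  · rcases hinv i (!i) hij with h0 | h0
    · left; rw [h, h0]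
    · right; rcases hH (!i) with h1 | h1 <;> rw [h1, h0] <;> rfl
  · rcases hinv i (!i) hij with h0 | h0
    · left; rw [h, h0]; rfl
    · right; rcases hH (!i) with h1 | h1 <;> rw [h1, h0] <;> rfl
  · right; exact hg'
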